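/- Let G be a finite tree on at least 2 vertices and let φ be an eigenvector of the Laplacian matrix L = D − A with eigenvalue λ₂(G), normalized so that Σ_{v ∈ V} φ(v)² = 1. Then Σ_{v ∈ V} |φ(v)| ≥ diam(G)^{1/2} / 4. -/

import Mathlib

open Matrix

/-- `(l, φ)` is an eigenpair of the (combinatorial) graph Laplacian `L = D - A`. -/
def SimpleGraph.IsLapEigenpair {V : Type*} [Fintype V] [DecidableEq V]
    (G : SimpleGraph V) [DecidableRel G.Adj] (l : ℝ) (φ : V → ℝ) : Prop :=
  φ ≠ 0 ∧ G.lapMatrix ℝ *ᵥ φ = l • φ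

/-- `l` is the second-smallest eigenvalue `λ₂(G)` of the Laplacian of a connected graph,
i.e. its smallest positive eigenvalue. -/
def SimpleGraph.IsSecondLapEigenvalue {V : Type*} [Fintype V] [DecidableEq V]
    (G : SimpleGraph V) [DecidableRel G.Adj] (l : ℝ) : Prop :=
  (∃ φ, G.IsLapEigenpair l φ) ∧ 0 < l ∧
    ∀ μ : ℝ, 0 < μ → (∃ ψ, G.IsLapEigenpair μ ψ) → l ≤ μ

/-!
Write `D = diam G`. Since `l > 0`, `φ` is orthogonal to the constants, so it changes sign: each
vertex `w` has a vertex `u` with `φ u * φ w ≤ 0`, and Cauchy–Schwarz along a shortest `w`–`u` path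
gives `φ w ^ 2 ≤ D * φᵀ L φ = D * l`. On the other hand `l * D ^ 2 ≤ 12`: for `a`, `b` at distance
`D`, test the Rayleigh quotient with `v ↦ d(a, v) - d(b, v)`, centred. In a tree this function
changes (by `±2`) only across the `D` edges of the `a`–`b` path, so its energy is at most `4 * D`,
while its values `2 * m - D` along that path make its squared norm at least `D ^ 3 / 3`. Hence
`1 = ∑ φ² ≤ max |φ| * ∑ |φ| ≤ √(12 / D) * ∑ |φ|`.
-/

open Finset

namespace Matrix.IsHermitian

variable {n : Type*} [Fintype n] [DecidableEq n] {A : Matrix n n ℝ}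

lemma mul_dotProduct_self_le_dotProduct_mulVec (hA : A.IsHermitian) {l : ℝ} (x : n → ℝ)
    (h : ∀ i, (hA.eigenvectorBasis i).ofLp ⬝ᵥ x ≠ 0 → l ≤ hA.eigenvalues i) :
    l * (x ⬝ᵥ x) ≤ x ⬝ᵥ (A *ᵥ x) := by
  set b := hA.eigenvectorBasis
  set c : n → ℝ := fun i => (b i).ofLp ⬝ᵥ x
  have hx : x = ∑ i, c i • (b i).ofLp := by
    have := congrArg WithLp.ofLp (b.sum_repr' (WithLp.toLp 2 x))
    simpa [c, EuclideanSpace.inner_eq_star_dotProduct, dotProduct_comm] using this.symm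
  have hself : x ⬝ᵥ x = ∑ i, c i ^ 2 := by
    nth_rewrite 1 [hx]
    simp [sum_dotProduct, smul_dotProduct, c, sq]
  have hquad : x ⬝ᵥ (A *ᵥ x) = ∑ i, hA.eigenvalues i * c i ^ 2 := by
    rw [dotProduct_comm]
    nth_rewrite 1 [hx]
    simp only [mulVec_sum, mulVec_smul, sum_dotProduct, smul_dotProduct, smul_eq_mul]
    refine sum_congr rfl fun i _ => ?_
    rw [hA.mulVec_eigenvectorBasis, smul_dotProduct, smul_eq_mul]
    ring
  rw [hself, hquad, mul_sum]
  refine sum_le_sum fun i _ => ?_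
  by_cases hc : c i = 0
  · simp [hc]
  · exact mul_le_mul_of_nonneg_right (h i hc) (sq_nonneg _)

end Matrix.IsHermitian

lemma sum_range_sq_two_mul_sub (n : ℕ) (c : ℝ) :
    ∑ m ∈ range (n + 1), (2 * (m : ℝ) - c) ^ 2 =
      2 * n * (n + 1) * (2 * n + 1) / 3 - 2 * c * n * (n + 1) + (n + 1) * c ^ 2 := by
  induction n with
  | zero => simp
  | succ k ih => rw [sum_range_succ, ih]; push_cast; ring

lemma cube_div_three_le_sum_range_sq (n : ℕ) (μ : ℝ) :
    (n : ℝ) ^ 3 / 3 ≤ ∑ m ∈ range (n + 1), (2 * (m : ℝ) - n - μ) ^ 2 := by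
  simp only [sub_sub, sum_range_sq_two_mul_sub]
  have hn : (0 : ℝ) ≤ n := n.cast_nonneg
  nlinarith [sq_nonneg μ, mul_nonneg hn (sq_nonneg μ)]

namespace SimpleGraph

variable {V : Type*} {G : SimpleGraph V}

def sqDiff (x : V → ℝ) : Sym2 V → ℝ :=
  Sym2.lift ⟨fun i j => (x i - x j) ^ 2, fun i j => by ring⟩

@[simp] lemma sqDiff_mk (x : V → ℝ) (i j : V) : sqDiff x s(i, j) = (x i - x j) ^ 2 := rfl

lemma sqDiff_sub_const (x : V → ℝ) (c : ℝ) : sqDiff (fun v => x v - c) = sqDiff x := by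
  ext e
  induction e with
  | h i j => simp only [sqDiff_mk]; ring

lemma sqDiff_nonneg (x : V → ℝ) (e : Sym2 V) : 0 ≤ sqDiff x e := by
  induction e with
  | h i j => exact sq_nonneg _

lemma sum_map_sqDiff_nonneg (x : V → ℝ) (l : List (Sym2 V)) : 0 ≤ (l.map (sqDiff x)).sum :=
  List.sum_nonneg fun y hy => by
    obtain ⟨e, -, rfl⟩ := List.mem_map.mp hy
    exact sqDiff_nonneg x e

lemma Walk.sq_sub_le_length_mul_sum_sqDiff (x : V → ℝ) {u v : V} (p : G.Walk u v) :
    (x u - x v) ^ 2 ≤ p.length * (p.edges.map (sqDiff x)).sum := by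
  induction p with
  | nil => simp
  | @cons a b c h q ih =>
    simp only [Walk.length_cons, Walk.edges_cons, List.map_cons, List.sum_cons, sqDiff_mk]
    push_cast
    rcases (Nat.cast_nonneg (α := ℝ) q.length).eq_or_lt with hn | hn
    · rw [← hn] at ih ⊢
      nlinarith [sum_map_sqDiff_nonneg x q.edges]
    · nlinarith [sq_nonneg ((q.length : ℝ) * (x a - x b) - (x b - x c))]

lemma Walk.dist_getVert_of_length_eq_dist {u v : V} (p : G.Walk u v)
    (hp : p.length = G.dist u v) {m : ℕ} (hm : m ≤ p.length) :
    G.dist u (p.getVert m) = m ∧ G.dist (p.getVert m) v = p.length - m := by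
  have h₁ := dist_le (p.take m)
  have h₂ := dist_le (p.drop m)
  have h := (p.take m).reachable.dist_triangle_left v
  simp only [take_length, drop_length] at h₁ h₂
  omega

lemma reachable_deleteEdges_of_dist_eq_dist_add_one {w i j : V} (hr : G.Reachable w j)
    (h : G.dist w i = G.dist w j + 1) : (G.deleteEdges {s(i, j)}).Reachable w j := by
  classical
  obtain ⟨q, hq⟩ := hr.exists_walk_length_eq_dist
  refine reachable_deleteEdges_iff_exists_walk.mpr ⟨q, fun he => ?_⟩
  have hi := q.fst_mem_support_of_mem_edges he
  have := (dist_le (q.takeUntil i hi)).trans (q.length_takeUntil_le_length hi)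
  omega

-- A vertex `w` lies on the side of `j` of the bridge `s(i, j)` iff `d(w, i) = d(w, j) + 1`;
-- if `p` avoids the bridge, `a` and `b` lie on the same side.
lemma IsTree.mem_edges_of_dist_add_dist_ne (hT : G.IsTree) {a b i j : V} (p : G.Walk a b)
    (hij : G.Adj i j) (h : G.dist a i + G.dist b j ≠ G.dist a j + G.dist b i) :
    s(i, j) ∈ p.edges := by
  by_contra hp
  have hab : (G.deleteEdges {s(i, j)}).Reachable a b :=
    reachable_deleteEdges_iff_exists_walk.mpr ⟨p, hp⟩
  have hbridge : ¬ (G.deleteEdges {s(i, j)}).Reachable i j :=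
    isBridge_iff.mp (isAcyclic_iff_forall_adj_isBridge.mp hT.isAcyclic hij)
  have to_j (w : V) (hw : G.dist w i = G.dist w j + 1) :
      (G.deleteEdges {s(i, j)}).Reachable w j :=
    reachable_deleteEdges_of_dist_eq_dist_add_one (hT.connected w j) hw
  have to_i (w : V) (hw : G.dist w j = G.dist w i + 1) :
      (G.deleteEdges {s(i, j)}).Reachable w i :=
    Sym2.eq_swap ▸ reachable_deleteEdges_of_dist_eq_dist_add_one (hT.connected w i) hw
  rcases hT.dist_eq_dist_add_one_of_adj a hij with ha | ha <;>
    rcases hT.dist_eq_dist_add_one_of_adj b hij with hb | hb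
  · omega
  · exact hbridge ((to_i b hb).symm.trans (hab.symm.trans (to_j a ha)))
  · exact hbridge ((to_i a ha).symm.trans (hab.trans (to_j b hb)))
  · omega

section Fintype

variable [Fintype V] [DecidableRel G.Adj]

lemma sum_adj_eq_sum_dart (F : V → V → ℝ) :
    ∑ i, ∑ j, (if G.Adj i j then F i j else 0) = ∑ d : G.Dart, F d.fst d.snd := by
  rw [← sum_product' (f := fun i j => if G.Adj i j then F i j else 0), ← sum_filter]
  exact sum_bij' (fun z hz => ⟨z, (mem_filter.mp hz).2⟩) (fun d _ => d.toProd)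
    (by simp) (fun d _ => by simp [d.adj]) (by simp) (by simp) (by simp)

variable [DecidableEq V]

lemma sum_dart_edge (w : Sym2 V → ℝ) :
    ∑ d : G.Dart, w d.edge = 2 * ∑ e ∈ G.edgeFinset, w e := by
  rw [← sum_fiberwise_of_maps_to (t := G.edgeFinset) (g := Dart.edge)
    (fun d _ => mem_edgeFinset.mpr d.edge_mem), mul_sum]
  refine sum_congr rfl fun e he => ?_
  rw [sum_congr rfl fun d hd => congrArg w (mem_filter.mp hd).2, sum_const,
    G.dart_edge_fiber_card e (mem_edgeFinset.mp he), nsmul_eq_mul, Nat.cast_ofNat]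

lemma dotProduct_lapMatrix_mulVec (x : V → ℝ) :
    x ⬝ᵥ (G.lapMatrix ℝ *ᵥ x) = ∑ e ∈ G.edgeFinset, sqDiff x e := by
  rw [← toLinearMap₂'_apply', lapMatrix_toLinearMap₂', sum_adj_eq_sum_dart
    (fun i j => (x i - x j) ^ 2)]
  have hedge : ∀ d : G.Dart, (x d.fst - x d.snd) ^ 2 = sqDiff x d.edge := fun d => rfl
  simp only [hedge, sum_dart_edge]
  ring

lemma Walk.IsTrail.sum_sqDiff_le {u v : V} {p : G.Walk u v} (hp : p.IsTrail) (x : V → ℝ) :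
    (p.edges.map (sqDiff x)).sum ≤ ∑ e ∈ G.edgeFinset, sqDiff x e := by
  rw [← List.sum_toFinset _ hp.edges_nodup]
  exact sum_le_sum_of_subset_of_nonneg
    (fun e he => mem_edgeFinset.mpr (p.edges_subset_edgeSet (List.mem_toFinset.mp he)))
    fun e _ _ => sqDiff_nonneg x e

lemma IsTree.sum_sqDiff_dist_sub_dist_le (hT : G.IsTree) (a b : V) :
    ∑ e ∈ G.edgeFinset, sqDiff (fun v => (G.dist a v : ℝ) - G.dist b v) e ≤ 4 * G.dist a b := by
  obtain ⟨p, hp, hlen⟩ := hT.connected.exists_path_of_dist a b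
  set g : V → ℝ := fun v => (G.dist a v : ℝ) - G.dist b v
  have hsub : p.edges.toFinset ⊆ G.edgeFinset := fun e he =>
    mem_edgeFinset.mpr (p.edges_subset_edgeSet (List.mem_toFinset.mp he))
  have hoff : ∀ e ∈ G.edgeFinset, e ∉ p.edges.toFinset → sqDiff g e = 0 := by
    intro e he hnot
    induction e with
    | h i j =>
      have hij : G.Adj i j := mem_edgeFinset.mp he
      have h : G.dist a i + G.dist b j = G.dist a j + G.dist b i := by
        by_contra hne
        exact hnot (List.mem_toFinset.mpr (hT.mem_edges_of_dist_add_dist_ne p hij hne))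
      have hR := congrArg (Nat.cast (R := ℝ)) h
      push_cast at hR
      simp only [sqDiff_mk, g, pow_eq_zero_iff two_ne_zero]
      linarith
  have hle : ∀ e ∈ G.edgeFinset, sqDiff g e ≤ 4 := by
    intro e he
    induction e with
    | h i j =>
      have hij : G.Adj i j := mem_edgeFinset.mp he
      rcases hT.dist_eq_dist_add_one_of_adj a hij with ha | ha <;>
        rcases hT.dist_eq_dist_add_one_of_adj b hij with hb | hb <;>
        · simp only [sqDiff_mk, g, ha, hb]; push_cast; nlinarith
  calc ∑ e ∈ G.edgeFinset, sqDiff g e = ∑ e ∈ p.edges.toFinset, sqDiff g e :=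
        (sum_subset hsub hoff).symm
    _ ≤ ∑ _e ∈ p.edges.toFinset, (4 : ℝ) := sum_le_sum fun e he => hle e (hsub he)
    _ ≤ 4 * G.dist a b := by
        rw [sum_const, nsmul_eq_mul, mul_comm, ← hlen, ← p.length_edges]
        gcongr
        exact_mod_cast p.edges.toFinset_card_le

lemma IsLapEigenpair.sum_eq_zero {l : ℝ} {φ : V → ℝ} (h : G.IsLapEigenpair l φ) (hl : l ≠ 0) :
    ∑ v, φ v = 0 := by
  have h1 : (fun _ => 1) ⬝ᵥ (G.lapMatrix ℝ *ᵥ φ) = 0 := by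
    rw [dotProduct_mulVec, ← mulVec_transpose, G.isSymm_lapMatrix (R := ℝ),
      lapMatrix_mulVec_const_eq_zero, zero_dotProduct]
  rw [h.2, dotProduct_smul, smul_eq_mul] at h1
  simpa [hl, dotProduct] using h1

lemma IsSecondLapEigenvalue.mul_dotProduct_self_le {l : ℝ} (hl : G.IsSecondLapEigenvalue l)
    (hconn : G.Connected) {x : V → ℝ} (hx : ∑ v, x v = 0) :
    l * (x ⬝ᵥ x) ≤ x ⬝ᵥ (G.lapMatrix ℝ *ᵥ x) := by
  have hA : (G.lapMatrix ℝ).IsHermitian := G.isHermitian_lapMatrix (R := ℝ)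
  refine hA.mul_dotProduct_self_le_dotProduct_mulVec x fun i hi => ?_
  have hb := hA.mulVec_eigenvectorBasis i
  set b := (hA.eigenvectorBasis i).ofLp
  have hpos : 0 < hA.eigenvalues i := by
    refine ((posSemidef_lapMatrix ℝ G).eigenvalues_nonneg i).lt_of_ne' fun h0 => hi ?_
    rw [h0, zero_smul] at hb
    have hconst := (G.lapMatrix_mulVec_eq_zero_iff_forall_reachable).mp hb
    obtain ⟨v₀⟩ := hconn.nonempty
    calc b ⬝ᵥ x = ∑ v, b v₀ * x v := sum_congr rfl fun v _ => by rw [hconst v v₀ (hconn v v₀)]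
      _ = 0 := by rw [← mul_sum, hx, mul_zero]
  refine hl.2.2 _ hpos ⟨b, fun h0 => ?_, hb⟩
  exact (hA.eigenvectorBasis.orthonormal.ne_zero i) (by simpa [b] using h0)

end Fintype

lemma cube_div_three_le_sum_sq_dist_sub_dist_sub [Fintype V] {a b : V} (hr : G.Reachable a b)
    (μ : ℝ) : (G.dist a b : ℝ) ^ 3 / 3 ≤ ∑ v, ((G.dist a v : ℝ) - G.dist b v - μ) ^ 2 := by
  classical
  obtain ⟨p, hp⟩ := hr.exists_walk_length_eq_dist
  have hv (m : ℕ) (hm : m ∈ range (G.dist a b + 1)) :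
      G.dist a (p.getVert m) = m ∧ G.dist b (p.getVert m) = G.dist a b - m := by
    rw [dist_comm (u := b), ← hp]
    exact p.dist_getVert_of_length_eq_dist hp (hp ▸ Nat.lt_succ_iff.mp (mem_range.mp hm))
  have hinj : Set.InjOn p.getVert (range (G.dist a b + 1)) := fun m hm m' hm' h => by
    rw [← (hv m hm).1, ← (hv m' hm').1, h]
  calc (G.dist a b : ℝ) ^ 3 / 3
      ≤ ∑ m ∈ range (G.dist a b + 1), (2 * (m : ℝ) - G.dist a b - μ) ^ 2 :=
        cube_div_three_le_sum_range_sq _ μ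
    _ = ∑ v ∈ (range (G.dist a b + 1)).image p.getVert,
          ((G.dist a v : ℝ) - G.dist b v - μ) ^ 2 := by
        rw [sum_image hinj]
        refine sum_congr rfl fun m hm => ?_
        have hm' : m ≤ G.dist a b := Nat.lt_succ_iff.mp (mem_range.mp hm)
        rw [(hv m hm).1, (hv m hm).2, Nat.cast_sub hm']
        ring
    _ ≤ ∑ v, ((G.dist a v : ℝ) - G.dist b v - μ) ^ 2 :=
        sum_le_sum_of_subset_of_nonneg (subset_univ _) fun _ _ _ => sq_nonneg _

variable [Fintype V] [DecidableEq V] [DecidableRel G.Adj]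

lemma sq_le_diam_mul_dotProduct_lapMatrix_mulVec (hconn : G.Connected) {x : V → ℝ}
    (hx : ∑ v, x v = 0) (w : V) : x w ^ 2 ≤ G.diam * (x ⬝ᵥ (G.lapMatrix ℝ *ᵥ x)) := by
  have := hconn.nonempty
  obtain ⟨u, -, hu⟩ : ∃ u ∈ univ, x u * x w ≤ 0 :=
    exists_le_of_sum_le univ_nonempty (by rw [← sum_mul, hx]; simp)
  obtain ⟨p, hp, hlen⟩ := hconn.exists_path_of_dist w u
  have hdiam : (p.length : ℝ) ≤ G.diam := by
    exact_mod_cast hlen ▸ G.dist_le_diam (connected_iff_ediam_ne_top.mp hconn)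
  calc x w ^ 2 ≤ (x w - x u) ^ 2 := by nlinarith
    _ ≤ p.length * (p.edges.map (sqDiff x)).sum := p.sq_sub_le_length_mul_sum_sqDiff x
    _ ≤ G.diam * (x ⬝ᵥ (G.lapMatrix ℝ *ᵥ x)) := by
        rw [dotProduct_lapMatrix_mulVec]
        exact mul_le_mul hdiam (hp.isTrail.sum_sqDiff_le x)
          (sum_map_sqDiff_nonneg x _) (Nat.cast_nonneg _)

theorem IsTree.secondLapEigenvalue_mul_diam_sq_le (hT : G.IsTree) {l : ℝ}
    (hl : G.IsSecondLapEigenvalue l) : l * G.diam ^ 2 ≤ 12 := by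
  have := hT.connected.nonempty
  obtain ⟨a, b, hab⟩ := G.exists_dist_eq_diam
  set μ : ℝ := (∑ v, ((G.dist a v : ℝ) - G.dist b v)) / Fintype.card V
  set f : V → ℝ := fun v => (G.dist a v : ℝ) - G.dist b v - μ
  have hf : ∑ v, f v = 0 := by
    simp only [f, sum_sub_distrib, sum_const, card_univ, nsmul_eq_mul, μ]
    field_simp
    ring
  have hvar : (G.diam : ℝ) ^ 3 / 3 ≤ f ⬝ᵥ f := by
    simpa [hab, dotProduct, ← sq] using
      cube_div_three_le_sum_sq_dist_sub_dist_sub (hT.connected a b) μ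
  have henergy : f ⬝ᵥ (G.lapMatrix ℝ *ᵥ f) ≤ 4 * G.diam := by
    rw [dotProduct_lapMatrix_mulVec, sqDiff_sub_const, ← hab]
    exact hT.sum_sqDiff_dist_sub_dist_le a b
  have hray := hl.mul_dotProduct_self_le hT.connected hf
  have hl0 := hl.2.1
  rcases (Nat.cast_nonneg (α := ℝ) G.diam).eq_or_lt with h0 | hpos
  · rw [← h0]; norm_num
  · nlinarith [mul_le_mul_of_nonneg_left hvar hl0.le]

end SimpleGraph

theorem sum_abs_fiedler_ge_sqrt_diam_div_four_general {V : Type*} [Fintype V] [DecidableEq V]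
    (G : SimpleGraph V) [DecidableRel G.Adj] (hT : G.IsTree)
    (l : ℝ) (hl : G.IsSecondLapEigenvalue l) (φ : V → ℝ)
    (hpair : G.IsLapEigenpair l φ) (hnorm : ∑ v : V, φ v ^ 2 = 1) :
    Real.sqrt (G.diam : ℝ) / 4 ≤ ∑ v : V, |φ v| := by
  have hl0 := hl.2.1
  have hquad : φ ⬝ᵥ (G.lapMatrix ℝ *ᵥ φ) = l := by
    rw [hpair.2, dotProduct_smul, smul_eq_mul]
    simp [dotProduct, ← sq, hnorm]
  have hmax (v : V) : |φ v| ≤ √(G.diam * l) := Real.abs_le_sqrt <| hquad ▸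
    G.sq_le_diam_mul_dotProduct_lapMatrix_mulVec hT.connected (hpair.sum_eq_zero hl0.ne') v
  set S := ∑ v, |φ v|
  have hone : 1 ≤ √(G.diam * l) * S := by
    calc (1 : ℝ) = ∑ v, |φ v| * |φ v| := by simp only [← sq, sq_abs, hnorm]
      _ ≤ ∑ v, √(G.diam * l) * |φ v| :=
          sum_le_sum fun v _ => mul_le_mul_of_nonneg_right (hmax v) (abs_nonneg _)
      _ = √(G.diam * l) * S := (mul_sum ..).symm
  have hone' : 1 ≤ G.diam * l * S ^ 2 := by
    have := one_le_pow₀ (n := 2) hone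
    rwa [mul_pow, Real.sq_sqrt (by positivity)] at this
  have hdiam := hT.secondLapEigenvalue_mul_diam_sq_le hl
  have hD : (G.diam : ℝ) ≤ (4 * S) ^ 2 := by
    nlinarith [mul_le_mul_of_nonneg_left hone' (Nat.cast_nonneg (α := ℝ) G.diam), sq_nonneg S]
  rw [div_le_iff₀ (by norm_num), mul_comm]
  calc √(G.diam : ℝ) ≤ √((4 * S) ^ 2) := Real.sqrt_le_sqrt hD
    _ = 4 * S := Real.sqrt_sq (by positivity)

/-- For a finite tree on at least two vertices, a unit Fiedler vector `φ` satisfies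
`Σ_v |φ(v)| ≥ diam(G)^{1/2} / 4`. -/
theorem sum_abs_fiedler_ge_sqrt_diam_div_four {V : Type*} [Fintype V] [DecidableEq V]
    (G : SimpleGraph V) [DecidableRel G.Adj] (hT : G.IsTree) (hcard : 2 ≤ Fintype.card V)
    (l : ℝ) (hl : G.IsSecondLapEigenvalue l) (φ : V → ℝ)
    (hpair : G.IsLapEigenpair l φ) (hnorm : ∑ v : V, φ v ^ 2 = 1) :
    Real.sqrt (G.diam : ℝ) / 4 ≤ ∑ v : V, |φ v| :=
  sum_abs_fiedler_ge_sqrt_diam_div_four_general G hT l hl φ hpair hnorm
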